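/- arXiv:2503.15963 — 2 statements merged into one kernel-verified Lean document; each statement's English description precedes it below -/
import Mathlib

section
/- Let μ, η be probability measures on ℝ^d and K a Markov kernel on ℝ^d such that (x₁,x₂) ↦ H(δ_{x₁}K | δ_{x₂}K) is Borel measurable. Set P := μ×K and suppose P* ∈ Π(μ, ηK) minimizes Q ↦ H(Q|P) over Π(μ, ηK). Then H(ηK | μK) ≤ H(P* | P) ≤ E_K(η | μ). -/
open MeasureTheory ProbabilityTheory ENNReal
open scoped RealInnerProductSpace Classical

noncomputable section

/-- Euclidean space `ℝ^d`. -/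
abbrev Ed (d : ℕ) : Type := EuclideanSpace ℝ (Fin d)

/-- Relative entropy `H(ν | μ)`: `∫ log (dν/dμ) dν` when `ν ≪ μ` and the
log-likelihood ratio is integrable, `∞` otherwise. -/
def relEnt {α : Type*} [MeasurableSpace α] (ν μ : Measure α) : ℝ≥0∞ :=
  if ν ≪ μ ∧ Integrable (MeasureTheory.llr ν μ) ν then
    ENNReal.ofReal (∫ x, MeasureTheory.llr ν μ x ∂ν) else ⊤

/-- `P` is a coupling of `μ` and `ν`. -/
def isCoupling {α β : Type*} [MeasurableSpace α] [MeasurableSpace β]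
    (P : Measure (α × β)) (μ : Measure α) (ν : Measure β) : Prop :=
  P.map Prod.fst = μ ∧ P.map Prod.snd = ν

/-- Squared 2-Wasserstein distance. -/
def W2sq {d : ℕ} (μ ν : Measure (Ed d)) : ℝ≥0∞ :=
  ⨅ (P : Measure (Ed d × Ed d)) (_ : isCoupling P μ ν),
    ∫⁻ p, ENNReal.ofReal (‖p.1 - p.2‖ ^ 2) ∂P

/-- Quadratic transportation cost inequality `T2(ρ)`. -/
def SatT2 {d : ℕ} (μ : Measure (Ed d)) (ρ : ℝ) : Prop :=
  ∀ ν : Measure (Ed d), IsProbabilityMeasure ν →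
    (1 / 2 : ℝ≥0∞) * W2sq ν μ ≤ ENNReal.ofReal ρ * relEnt ν μ

/-- Transport of a measure by a Markov kernel: `μK`. -/
def mbind {d : ℕ} (μ : Measure (Ed d)) (K : Kernel (Ed d) (Ed d)) : Measure (Ed d) :=
  μ.bind fun x => K x

/-- `K` is the Gibbs kernel with potential `W`: `K(x,dy) = e^{-W(x,y)} dy`,
with `W` measurable and `y ↦ W(x,y)` of class `C¹`. -/
def IsGibbs {d : ℕ} (Wf : Ed d → Ed d → ℝ) (K : Kernel (Ed d) (Ed d)) : Prop :=
  Measurable (Function.uncurry Wf) ∧ (∀ x, ContDiff ℝ 1 (Wf x)) ∧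
    ∀ x, K x = (volume : Measure (Ed d)).withDensity fun y => ENNReal.ofReal (Real.exp (-Wf x y))

/-- Fisher information cost of a Gibbs kernel. -/
def fisherCost {d : ℕ} (Wf : Ed d → Ed d → ℝ) (K : Kernel (Ed d) (Ed d)) (x₁ x₂ : Ed d) : ℝ≥0∞ :=
  ∫⁻ y, ENNReal.ofReal (‖gradient (Wf x₁) y - gradient (Wf x₂) y‖ ^ 2) ∂(K x₁)

/-- Local log-Sobolev inequality `LS_loc(ρ)` for a Gibbs kernel. -/
def LSloc {d : ℕ} (Wf : Ed d → Ed d → ℝ) (K : Kernel (Ed d) (Ed d)) (ρ : ℝ) : Prop :=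
  ∀ x₁ x₂ : Ed d, relEnt (K x₁) (K x₂) ≤ ENNReal.ofReal (ρ / 2) * fisherCost Wf K x₁ x₂

/-- Fisher–Lipschitz inequality `J₂(κ)` for a Gibbs kernel. -/
def FisherLip {d : ℕ} (Wf : Ed d → Ed d → ℝ) (K : Kernel (Ed d) (Ed d)) (κ : ℝ) : Prop :=
  ∀ x₁ x₂ : Ed d, fisherCost Wf K x₁ x₂ ≤ ENNReal.ofReal (κ ^ 2 * ‖x₁ - x₂‖ ^ 2)

/-- Entropic transport cost `E_K(ν | μ)`. -/
def entCost {d : ℕ} (K : Kernel (Ed d) (Ed d)) (ν μ : Measure (Ed d)) : ℝ≥0∞ :=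
  ⨅ (P : Measure (Ed d × Ed d)) (_ : isCoupling P ν μ),
    ∫⁻ p, relEnt (K p.1) (K p.2) ∂P

/-- `φ(ε) = ε⁻¹ / (√(1/4 + ε⁻¹) + 1/2)`. -/
def phi (ε : ℝ) : ℝ := ε⁻¹ / (Real.sqrt (1 / 4 + ε⁻¹) + 1 / 2)

/-- Application of a matrix to a vector of `ℝ^d`. -/
def mApp {d : ℕ} (M : Matrix (Fin d) (Fin d) ℝ) (x : Ed d) : Ed d :=
  Matrix.toEuclideanLin M x

/-- Spectral norm of a matrix. -/
def spec {d : ℕ} (M : Matrix (Fin d) (Fin d) ℝ) : ℝ :=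
  ‖LinearMap.toContinuousLinearMap (Matrix.toEuclideanLin M)‖

/-- Loewner order on matrices. -/
def loewnerLE {d : ℕ} (A B : Matrix (Fin d) (Fin d) ℝ) : Prop := (B - A).PosSemidef

/-- Principal square root of a positive semidefinite matrix (junk value otherwise). -/
def msqrt {d : ℕ} (A : Matrix (Fin d) (Fin d) ℝ) : Matrix (Fin d) (Fin d) ℝ :=
  if h : A.PosSemidef then
    h.1.eigenvectorUnitary.1 * Matrix.diagonal (Real.sqrt ∘ h.1.eigenvalues) *
      (star h.1.eigenvectorUnitary : Matrix (Fin d) (Fin d) ℝ) else 0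

/-- Smallest eigenvalue of a symmetric matrix (junk value otherwise). -/
def lmin {d : ℕ} (A : Matrix (Fin d) (Fin d) ℝ) : ℝ :=
  if h : A.IsHermitian then ⨅ i, h.eigenvalues i else 0

/-- Largest eigenvalue of a symmetric matrix (junk value otherwise). -/
def lmax {d : ℕ} (A : Matrix (Fin d) (Fin d) ℝ) : ℝ :=
  if h : A.IsHermitian then ⨆ i, h.eigenvalues i else 0

/-- Riccati map `Ricc_ϖ(s) = (I + (ϖ + s)⁻¹)⁻¹`. -/
def Ricc {d : ℕ} (ϖ s : Matrix (Fin d) (Fin d) ℝ) : Matrix (Fin d) (Fin d) ℝ :=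
  (1 + (ϖ + s)⁻¹)⁻¹

/-- Fixed point `r_ϖ = -ϖ/2 + (ϖ + (ϖ/2)²)^{1/2}` of the Riccati map. -/
def riccFix {d : ℕ} (ϖ : Matrix (Fin d) (Fin d) ℝ) : Matrix (Fin d) (Fin d) ℝ :=
  -((1 / 2 : ℝ) • ϖ) + msqrt (ϖ + ((1 / 2 : ℝ) • ϖ) ^ 2)

/-- `Ψ_γ(v) = (I + γ v γᵀ)⁻¹`. -/
def Psim {d : ℕ} (γ v : Matrix (Fin d) (Fin d) ℝ) : Matrix (Fin d) (Fin d) ℝ :=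
  (1 + γ * v * γ.transpose)⁻¹

/-- Hessian lower bound `∇²U ≥ M` (as quadratic forms). -/
def HessLB {d : ℕ} (U : Ed d → ℝ) (M : Matrix (Fin d) (Fin d) ℝ) : Prop :=
  ∀ x v : Ed d, ⟪v, mApp M v⟫ ≤ iteratedFDeriv ℝ 2 U x ![v, v]

/-- Hessian upper bound `∇²U ≤ M` (as quadratic forms). -/
def HessUB {d : ℕ} (U : Ed d → ℝ) (M : Matrix (Fin d) (Fin d) ℝ) : Prop :=
  ∀ x v : Ed d, iteratedFDeriv ℝ 2 U x ![v, v] ≤ ⟪v, mApp M v⟫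

/-- Linear-Gaussian reference potential `W(x,y) = -log g_τ(y - (α + βx))`. -/
def gaussW {d : ℕ} (a : Ed d) (β τ : Matrix (Fin d) (Fin d) ℝ) (x y : Ed d) : ℝ :=
  -Real.log ((Real.sqrt ((2 * Real.pi) ^ d * τ.det))⁻¹ *
    Real.exp (-(1 / 2) * ⟪y - (mApp β x + a), mApp τ⁻¹ (y - (mApp β x + a))⟫))

/-- Boltzmann–Gibbs measure `λ_U(dx) = e^{-U(x)} dx`. -/
def gibbsDensity {d : ℕ} (U : Ed d → ℝ) : Measure (Ed d) :=
  (volume : Measure (Ed d)).withDensity fun x => ENNReal.ofReal (Real.exp (-U x))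

/-- Conditional covariance `Σ_K(x) = (1/2) ∫∫ (y-z)(y-z)ᵀ K(x,dy) K(x,dz)`. -/
def condCov {d : ℕ} (K : Kernel (Ed d) (Ed d)) (x : Ed d) : Matrix (Fin d) (Fin d) ℝ :=
  Matrix.of fun i j =>
    (1 / 2) * ∫ p : Ed d × Ed d, (p.1 i - p.2 i) * (p.1 j - p.2 j) ∂((K x).prod (K x))

/-- Barycentric projection `K(I)(x) = ∫ y K(x,dy)`. -/
def bary {d : ℕ} (K : Kernel (Ed d) (Ed d)) (x : Ed d) : Ed d := ∫ y, y ∂(K x)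

/-- Gradient matrix of a vector field: `(i,j)` entry is `∂ᵢ hʲ(x)`. -/
def gradMat {d : ℕ} (h : Ed d → Ed d) (x : Ed d) : Matrix (Fin d) (Fin d) ℝ :=
  Matrix.of fun i j => gradient (fun x' => h x' j) x i

/-- Sinkhorn marginal flow `π_n`. -/
def piSeq {d : ℕ} (μ η : Measure (Ed d)) (K : ℕ → Kernel (Ed d) (Ed d)) (n : ℕ) :
    Measure (Ed d) :=
  if n % 2 = 0 then mbind μ (K n) else mbind η (K n)

/-- Sinkhorn bridges `𝒫_n`. -/
def PSeq {d : ℕ} (μ η : Measure (Ed d)) (K : ℕ → Kernel (Ed d) (Ed d)) (n : ℕ) :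
    Measure (Ed d × Ed d) :=
  if n % 2 = 0 then μ ⊗ₘ K n else (η ⊗ₘ K n).map Prod.swap

/-- `n`-fold composition of a Markov kernel. -/
def kpow {d : ℕ} (S : Kernel (Ed d) (Ed d)) : ℕ → Kernel (Ed d) (Ed d)
  | 0 => Kernel.id
  | n + 1 => (kpow S n) ∘ₖ S

end


section AuxLemmas

variable {α : Type*} {β : Type*} [MeasurableSpace α] [MeasurableSpace β]
variable {ν μ : Measure α}

lemma aux_exp_neg_llr_integrable [IsProbabilityMeasure ν] [IsFiniteMeasure μ] (hac : ν ≪ μ) :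
    Integrable (fun x => Real.exp (-(llr ν μ x))) ν :=
  Measure.integrable_toReal_rnDeriv.congr (exp_neg_llr hac).symm

lemma aux_exp_neg_llr_le_one [IsProbabilityMeasure ν] [IsProbabilityMeasure μ] (hac : ν ≪ μ) :
    ∫ x, Real.exp (-(llr ν μ x)) ∂ν ≤ 1 := by
  rw [integral_congr_ae (exp_neg_llr hac)]
  calc ∫ x, (μ.rnDeriv ν x).toReal ∂ν ≤ (μ Set.univ).toReal := by
        simpa using Measure.setIntegral_toReal_rnDeriv_le (μ := μ) (ν := ν) (s := Set.univ)
          (measure_ne_top μ _)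
  _ = 1 := by simp

lemma aux_negpart_le (t : ℝ) : max (-t) 0 ≤ Real.exp (-t) := by
  have h := Real.add_one_le_exp (-t)
  have h2 := Real.exp_nonneg (-t)
  simp only [max_le_iff]
  constructor <;> linarith

lemma aux_negpart_integrable [IsProbabilityMeasure ν] [IsFiniteMeasure μ] (hac : ν ≪ μ) :
    Integrable (fun x => max (-(llr ν μ x)) 0) ν := by
  refine Integrable.mono (aux_exp_neg_llr_integrable hac) ?_ ?_
  · exact ((measurable_llr _ _).neg.max measurable_const).aestronglyMeasurable
  · refine Filter.Eventually.of_forall fun x => ?_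
    rw [Real.norm_eq_abs, Real.norm_eq_abs, abs_of_nonneg (le_max_right _ _),
      abs_of_nonneg (Real.exp_nonneg _)]
    exact aux_negpart_le _

lemma aux_negpart_integral_le_one [IsProbabilityMeasure ν] [IsProbabilityMeasure μ] (hac : ν ≪ μ) :
    ∫ x, max (-(llr ν μ x)) 0 ∂ν ≤ 1 :=
  le_trans (integral_mono (aux_negpart_integrable hac) (aux_exp_neg_llr_integrable hac)
    fun x => aux_negpart_le _) (aux_exp_neg_llr_le_one hac)

lemma aux_gibbs [IsProbabilityMeasure ν] [IsProbabilityMeasure μ] (hac : ν ≪ μ)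
    (hint : Integrable (llr ν μ) ν) : 0 ≤ ∫ x, llr ν μ x ∂ν := by
  have h1 : ∫ x, (1 - Real.exp (-(llr ν μ x))) ∂ν ≤ ∫ x, llr ν μ x ∂ν := by
    refine integral_mono ((integrable_const 1).sub (aux_exp_neg_llr_integrable hac)) hint
      fun x => ?_
    have := Real.add_one_le_exp (-(llr ν μ x))
    simp only
    linarith
  have h2 : ∫ x, (1 - Real.exp (-(llr ν μ x))) ∂ν
      = 1 - ∫ x, Real.exp (-(llr ν μ x)) ∂ν := by
    rw [integral_sub (integrable_const 1) (aux_exp_neg_llr_integrable hac)]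
    simp
  have := aux_exp_neg_llr_le_one hac
  linarith

lemma aux_abs_le (a b l : ℝ) (hb : b = a - l) :
    |b| ≤ max a 0 + max (-l) 0 + Real.exp (-b) := by
  have h1 : a ≤ max a 0 := le_max_left _ _
  have h2 : -l ≤ max (-l) 0 := le_max_left _ _
  have h3 : (0:ℝ) ≤ max a 0 := le_max_right _ _
  have h4 : (0:ℝ) ≤ max (-l) 0 := le_max_right _ _
  have h5 : -b ≤ Real.exp (-b) := by
    have := Real.add_one_le_exp (-b); linarith
  have h6 : (0:ℝ) ≤ Real.exp (-b) := Real.exp_nonneg _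
  rcases abs_cases b with ⟨he, _⟩ | ⟨he, _⟩ <;> rw [he] <;> linarith


theorem relEnt_map_le {ν μ : Measure α} [IsProbabilityMeasure ν] [IsProbabilityMeasure μ]
    {T : α → β} (hT : Measurable T) :
    relEnt (ν.map T) (μ.map T) ≤ relEnt ν μ := by
  by_cases hfin : ν ≪ μ ∧ Integrable (llr ν μ) ν
  swap
  · have e : relEnt ν μ = ⊤ := if_neg hfin
    rw [e]; exact le_top
  obtain ⟨hac, hint⟩ := hfin
  have hTae : AEMeasurable T ν := hT.aemeasurable
  haveI : IsProbabilityMeasure (ν.map T) := Measure.isProbabilityMeasure_map hT.aemeasurable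
  haveI : IsProbabilityMeasure (μ.map T) := Measure.isProbabilityMeasure_map hT.aemeasurable
  set g : β → ℝ≥0∞ := (ν.map T).rnDeriv (μ.map T) with hg
  have hgm : Measurable g := Measure.measurable_rnDeriv _ _
  have hacT : ν.map T ≪ μ.map T := hac.map hT
  set μ' : Measure α := μ.withDensity (fun x => g (T x)) with hμ'
  have hgTm : Measurable fun x => g (T x) := hgm.comp hT
  haveI : IsProbabilityMeasure μ' := by
    constructor
    rw [hμ', withDensity_apply _ MeasurableSet.univ, Measure.restrict_univ,
      ← lintegral_map hgm hT, Measure.lintegral_rnDeriv hacT]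
    simp
  -- ν gives no mass to {g ∘ T = 0}
  have hzero : ν {x | g (T x) = 0} = 0 := by
    have hset : MeasurableSet {y | g y = 0} := hgm (measurableSet_singleton 0)
    have h1 : (ν.map T) {y | g y = 0} = 0 := by
      conv_lhs => rw [← Measure.withDensity_rnDeriv_eq _ _ hacT]
      rw [withDensity_apply _ hset]
      rw [setLIntegral_congr_fun hset (fun y hy => hy)]
      simp
    have : {x | g (T x) = 0} = T ⁻¹' {y | g y = 0} := rfl
    rw [this, ← Measure.map_apply hT hset]
    exact h1
  -- ν ≪ μ'
  have hacμ' : ν ≪ μ' := by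
    refine Measure.AbsolutelyContinuous.mk fun s hs hs0 => ?_
    rw [hμ', withDensity_apply _ hs] at hs0
    have h2 : (fun x => g (T x)) =ᵐ[μ.restrict s] 0 :=
      (lintegral_eq_zero_iff hgTm).mp hs0
    have hsetne : MeasurableSet {x | g (T x) ≠ 0} := (hgTm (measurableSet_singleton 0)).compl
    have h3 : μ ({x | g (T x) ≠ 0} ∩ s) = 0 := by
      have := h2
      rw [Filter.EventuallyEq, ae_iff] at this
      simpa [Measure.restrict_apply hsetne] using this
    have h4 : ν ({x | g (T x) ≠ 0} ∩ s) = 0 := hac h3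
    have h5 : s ⊆ ({x | g (T x) ≠ 0} ∩ s) ∪ {x | g (T x) = 0} := by
      intro x hx
      by_cases hgx : g (T x) = 0
      · exact Or.inr hgx
      · exact Or.inl ⟨hgx, hx⟩
    refine le_antisymm ?_ zero_le
    calc ν s ≤ ν (({x | g (T x) ≠ 0} ∩ s) ∪ {x | g (T x) = 0}) := measure_mono h5
    _ ≤ ν ({x | g (T x) ≠ 0} ∩ s) + ν {x | g (T x) = 0} := measure_union_le _ _
    _ = 0 := by rw [h4, hzero, add_zero]
  -- chain rule for llr, a.e. ν
  have hch : ν.rnDeriv μ' * μ'.rnDeriv μ =ᵐ[μ] ν.rnDeriv μ := Measure.rnDeriv_mul_rnDeriv hacμ'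
  have hwd : μ'.rnDeriv μ =ᵐ[μ] fun x => g (T x) := Measure.rnDeriv_withDensity μ hgTm
  have hpos1 : ∀ᵐ x ∂ν, 0 < ν.rnDeriv μ' x := Measure.rnDeriv_pos hacμ'
  have hfin1 : ∀ᵐ x ∂ν, ν.rnDeriv μ' x < ⊤ := hacμ'.ae_le (Measure.rnDeriv_lt_top ν μ')
  have hpos3 : ∀ᵐ x ∂ν, 0 < g (T x) := by
    have h := Measure.rnDeriv_pos hacT
    rw [← hg] at h
    exact (ae_map_iff hTae (measurableSet_lt measurable_const hgm)).mp h
  have hfin3 : ∀ᵐ x ∂ν, g (T x) < ⊤ := by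
    have h : ∀ᵐ y ∂(ν.map T), g y < ⊤ := hacT.ae_le (Measure.rnDeriv_lt_top _ _)
    exact (ae_map_iff hTae (measurableSet_lt hgm measurable_const)).mp h
  set A := llr ν μ with hA
  set B := llr ν μ' with hB
  set L := fun x => llr (ν.map T) (μ.map T) (T x) with hL
  have hdecomp : ∀ᵐ x ∂ν, A x = B x + L x := by
    filter_upwards [hac.ae_le hch, hac.ae_le hwd, hpos1, hfin1, hpos3, hfin3]
      with x h1 h2 hp1 hf1 hp3 hf3
    have hrw : ν.rnDeriv μ x = ν.rnDeriv μ' x * g (T x) := by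
      rw [← h1]; simp only [Pi.mul_apply]; rw [h2]
    have hL' : L x = Real.log (g (T x)).toReal := rfl
    rw [hA, hB, llr, llr, hrw, hL', ENNReal.toReal_mul, Real.log_mul]
    · exact ENNReal.toReal_ne_zero.mpr ⟨hp1.ne', hf1.ne⟩
    · exact ENNReal.toReal_ne_zero.mpr ⟨hp3.ne', hf3.ne⟩
  -- integrability of B
  have hexpB : Integrable (fun x => Real.exp (-(B x))) ν := aux_exp_neg_llr_integrable hacμ'
  have hLneg : Integrable (fun x => max (-(L x)) 0) ν := by
    have h0 : Integrable (fun y => max (-(llr (ν.map T) (μ.map T) y)) 0) (ν.map T) :=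
      aux_negpart_integrable hacT
    exact (integrable_map_measure h0.aestronglyMeasurable hTae).mp h0
  have hBint : Integrable B ν := by
    refine Integrable.mono' (g := fun x => max (A x) 0 + max (-(L x)) 0 + Real.exp (-(B x)))
      ((hint.pos_part.add hLneg).add hexpB)
      (measurable_llr ν μ').aestronglyMeasurable ?_
    filter_upwards [hdecomp] with x hx
    exact aux_abs_le (A x) (B x) (L x) (by linarith)
  have hLint : Integrable L ν := by
    refine (hint.sub hBint).congr ?_
    filter_upwards [hdecomp] with x hx
    simp only [Pi.sub_apply]
    linarith
  have hLint' : Integrable (llr (ν.map T) (μ.map T)) (ν.map T) := by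
    rw [integrable_map_measure (stronglyMeasurable_llr _ _).aestronglyMeasurable hTae]
    exact hLint
  -- values
  have hval : ∫ y, llr (ν.map T) (μ.map T) y ∂(ν.map T) = ∫ x, L x ∂ν :=
    integral_map hTae (stronglyMeasurable_llr _ _).aestronglyMeasurable
  have hsum : ∫ x, A x ∂ν = ∫ x, B x ∂ν + ∫ x, L x ∂ν := by
    rw [← integral_add hBint hLint]
    exact integral_congr_ae hdecomp
  have hBpos : 0 ≤ ∫ x, B x ∂ν := aux_gibbs hacμ' hBint
  have e1 : relEnt (ν.map T) (μ.map T)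
      = ENNReal.ofReal (∫ y, llr (ν.map T) (μ.map T) y ∂(ν.map T)) := if_pos ⟨hacT, hLint'⟩
  have e2 : relEnt ν μ = ENNReal.ofReal (∫ x, A x ∂ν) := if_pos ⟨hac, hint⟩
  rw [e1, e2]
  refine ENNReal.ofReal_le_ofReal ?_
  rw [hval]
  linarith

open ProbabilityTheory in
theorem relEnt_compProd_le {R : Measure α} [IsProbabilityMeasure R]
    [MeasurableSpace.CountablyGenerated β]
    (κ ξ : Kernel α β) [IsMarkovKernel κ] [IsMarkovKernel ξ]
    (hm : Measurable fun a => relEnt (κ a) (ξ a)) :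
    relEnt (R ⊗ₘ κ) (R ⊗ₘ ξ) ≤ ∫⁻ a, relEnt (κ a) (ξ a) ∂ R := by
  by_cases hC : ∫⁻ a, relEnt (κ a) (ξ a) ∂ R = ⊤
  · rw [hC]; exact le_top
  have haelt : ∀ᵐ a ∂ R, relEnt (κ a) (ξ a) < ⊤ := ae_lt_top hm hC
  have haeP : ∀ᵐ a ∂ R, (κ a ≪ ξ a) ∧ Integrable (llr (κ a) (ξ a)) (κ a) := by
    filter_upwards [haelt] with a ha
    by_contra hcon
    have he : relEnt (κ a) (ξ a) = ⊤ := if_neg hcon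
    rw [he] at ha
    exact absurd ha (lt_irrefl _)
  set h : α × β → ℝ≥0∞ := fun p => Kernel.rnDeriv κ ξ p.1 p.2 with hh
  have hhm : Measurable h := Kernel.measurable_rnDeriv κ ξ
  -- R ⊗ₘ κ is the density h against R ⊗ₘ ξ
  have hclaim : R ⊗ₘ κ = (R ⊗ₘ ξ).withDensity h := by
    ext s hs
    rw [withDensity_apply _ hs, ← lintegral_indicator hs,
      Measure.lintegral_compProd ((hhm.indicator hs))]
    rw [Measure.compProd_apply hs]
    refine lintegral_congr_ae ?_
    filter_upwards [haeP] with a ha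
    have hslice : MeasurableSet (Prod.mk a ⁻¹' s) := measurable_prodMk_left hs
    have h1 : ∀ b, s.indicator h (a, b)
        = (Prod.mk a ⁻¹' s).indicator (fun b => Kernel.rnDeriv κ ξ a b) b := by
      intro b
      by_cases hb : (a, b) ∈ s
      · rw [Set.indicator_of_mem hb, Set.indicator_of_mem (show b ∈ Prod.mk a ⁻¹' s from hb)]
      · rw [Set.indicator_of_notMem hb,
          Set.indicator_of_notMem (show b ∉ Prod.mk a ⁻¹' s from hb)]
    simp_rw [h1]
    rw [lintegral_indicator hslice,
      lintegral_congr_ae (ae_restrict_of_ae (Kernel.rnDeriv_eq_rnDeriv_measure)),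
      Measure.setLIntegral_rnDeriv ha.1]
  have hacν : R ⊗ₘ κ ≪ R ⊗ₘ ξ := by
    rw [hclaim]; exact withDensity_absolutelyContinuous _ _
  have hrd : (R ⊗ₘ κ).rnDeriv (R ⊗ₘ ξ) =ᵐ[R ⊗ₘ ξ] h := by
    rw [hclaim]; exact Measure.rnDeriv_withDensity _ hhm
  set Λ : α × β → ℝ := fun q => Real.log (h q).toReal with hΛdef
  have hΛm : Measurable Λ := hhm.ennreal_toReal.log
  have hΛ : llr (R ⊗ₘ κ) (R ⊗ₘ ξ) =ᵐ[R ⊗ₘ κ] Λ := by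
    filter_upwards [hacν.ae_le hrd] with q hq
    rw [llr, hq]
  -- fiberwise identification
  have hfiber : ∀ᵐ a ∂ R, (fun b => Λ (a, b)) =ᵐ[κ a] llr (κ a) (ξ a) := by
    filter_upwards [haeP] with a ha
    have h2 : Kernel.rnDeriv κ ξ a =ᵐ[κ a] (κ a).rnDeriv (ξ a) :=
      ha.1.ae_le Kernel.rnDeriv_eq_rnDeriv_measure
    filter_upwards [h2] with b hb
    rw [hΛdef]
    simp only [hh]
    rw [hb, llr]
  -- integrability of Λ with respect to R ⊗ₘ κ
  have habs : ∀ᵐ a ∂ R, ∫ b, ‖Λ (a, b)‖ ∂(κ a) ≤ ∫ b, llr (κ a) (ξ a) b ∂(κ a)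
      + 2 * ∫ b, max (-(llr (κ a) (ξ a) b)) 0 ∂(κ a) := by
    filter_upwards [hfiber, haeP] with a hfa ha
    refine le_of_eq ?_
    have h3 : ∫ b, ‖Λ (a, b)‖ ∂(κ a) = ∫ b, |llr (κ a) (ξ a) b| ∂(κ a) := by
      refine integral_congr_ae ?_
      filter_upwards [hfa] with b hb
      rw [Real.norm_eq_abs, hb]
    rw [h3]
    have h4 : ∀ b, |llr (κ a) (ξ a) b| = llr (κ a) (ξ a) b
        + 2 * max (-(llr (κ a) (ξ a) b)) 0 := by
      intro b
      rcases abs_cases (llr (κ a) (ξ a) b) with ⟨he, hp⟩ | ⟨he, hp⟩ <;>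
        · rw [he, max_def]
          split <;> rename_i hcond <;> [skip; skip] <;> push_neg at * <;> linarith
    calc ∫ b, |llr (κ a) (ξ a) b| ∂(κ a)
        = ∫ b, (llr (κ a) (ξ a) b + 2 * max (-(llr (κ a) (ξ a) b)) 0) ∂(κ a) := by
          exact integral_congr_ae (Filter.Eventually.of_forall fun b => h4 b)
      _ = ∫ b, llr (κ a) (ξ a) b ∂(κ a) + 2 * ∫ b, max (-(llr (κ a) (ξ a) b)) 0 ∂(κ a) := by
          rw [integral_add ha.2 ((aux_negpart_integrable ha.1).const_mul 2), integral_const_mul]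
  have hbound : ∀ᵐ a ∂ R, ENNReal.ofReal (∫ b, ‖Λ (a, b)‖ ∂(κ a))
      ≤ relEnt (κ a) (ξ a) + 2 := by
    filter_upwards [habs, haeP] with a hab ha
    have hg : 0 ≤ ∫ b, llr (κ a) (ξ a) b ∂(κ a) := aux_gibbs ha.1 ha.2
    have hneg : ∫ b, max (-(llr (κ a) (ξ a) b)) 0 ∂(κ a) ≤ 1 :=
      aux_negpart_integral_le_one ha.1
    have he : relEnt (κ a) (ξ a) = ENNReal.ofReal (∫ b, llr (κ a) (ξ a) b ∂(κ a)) := if_pos ha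
    calc ENNReal.ofReal (∫ b, ‖Λ (a, b)‖ ∂(κ a))
        ≤ ENNReal.ofReal (∫ b, llr (κ a) (ξ a) b ∂(κ a) + 2) := by
          refine ENNReal.ofReal_le_ofReal ?_
          refine le_trans hab ?_
          linarith
      _ = ENNReal.ofReal (∫ b, llr (κ a) (ξ a) b ∂(κ a)) + 2 := by
          rw [ENNReal.ofReal_add hg (by norm_num)]
          norm_num
      _ = relEnt (κ a) (ξ a) + 2 := by rw [he]
  have hFm : StronglyMeasurable fun a => ∫ b, ‖Λ (a, b)‖ ∂(κ a) := by
    exact MeasureTheory.StronglyMeasurable.integral_kernel_prod_right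
      (f := fun a b => ‖Λ (a, b)‖) (hΛm.norm).stronglyMeasurable
  have hF1int : Integrable (fun a => ∫ b, ‖Λ (a, b)‖ ∂(κ a)) R := by
    refine ⟨hFm.aestronglyMeasurable, ?_⟩
    rw [hasFiniteIntegral_iff_ofReal (Filter.Eventually.of_forall fun a =>
      integral_nonneg fun b => norm_nonneg _)]
    calc ∫⁻ a, ENNReal.ofReal (∫ b, ‖Λ (a, b)‖ ∂(κ a)) ∂ R
        ≤ ∫⁻ a, (relEnt (κ a) (ξ a) + 2) ∂ R := lintegral_mono_ae hbound
      _ = (∫⁻ a, relEnt (κ a) (ξ a) ∂ R) + 2 := by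
          rw [lintegral_add_right _ measurable_const, lintegral_const]
          simp
      _ < ⊤ := by
          refine ENNReal.add_lt_top.mpr ⟨?_, by norm_num⟩
          exact lt_top_iff_ne_top.mpr hC
  have hΛint : Integrable Λ (R ⊗ₘ κ) := by
    rw [Measure.integrable_compProd_iff hΛm.aestronglyMeasurable]
    refine ⟨?_, hF1int⟩
    filter_upwards [hfiber, haeP] with a hfa ha
    exact ha.2.congr hfa.symm
  have hllrint : Integrable (llr (R ⊗ₘ κ) (R ⊗ₘ ξ)) (R ⊗ₘ κ) := hΛint.congr hΛ.symm
  -- compute the value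
  have hFint : Integrable (fun a => ∫ b, Λ (a, b) ∂(κ a)) R := by
    refine hF1int.mono' ?_ ?_
    · exact (MeasureTheory.StronglyMeasurable.integral_kernel_prod_right
        (f := fun a b => Λ (a, b)) hΛm.stronglyMeasurable).aestronglyMeasurable
    · refine Filter.Eventually.of_forall fun a => ?_
      exact norm_integral_le_integral_norm _
  have hFnn : ∀ᵐ a ∂ R, 0 ≤ ∫ b, Λ (a, b) ∂(κ a) := by
    filter_upwards [hfiber, haeP] with a hfa ha
    rw [integral_congr_ae hfa]
    exact aux_gibbs ha.1 ha.2
  have he1 : relEnt (R ⊗ₘ κ) (R ⊗ₘ ξ)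
      = ENNReal.ofReal (∫ q, llr (R ⊗ₘ κ) (R ⊗ₘ ξ) q ∂(R ⊗ₘ κ)) := if_pos ⟨hacν, hllrint⟩
  rw [he1, integral_congr_ae hΛ, Measure.integral_compProd hΛint]
  calc ENNReal.ofReal (∫ a, ∫ b, Λ (a, b) ∂(κ a) ∂ R)
      ≤ ∫⁻ a, ENNReal.ofReal (∫ b, Λ (a, b) ∂(κ a)) ∂ R :=
        le_of_eq (ofReal_integral_eq_lintegral_ofReal hFint hFnn)
    _ = ∫⁻ a, relEnt (κ a) (ξ a) ∂ R := by
        refine lintegral_congr_ae ?_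
        filter_upwards [hfiber, haeP] with a hfa ha
        rw [integral_congr_ae hfa]
        exact (if_pos ha).symm


end AuxLemmas

/-- entropic sandwich for the Schrödinger bridge from `μ` to `ηK`
with reference measure `P = μ × K`. -/
theorem bridge_entropy_sandwich
    (d : ℕ) (hd : 1 ≤ d)
    (μ η : Measure (Ed d)) [IsProbabilityMeasure μ] [IsProbabilityMeasure η]
    (K : Kernel (Ed d) (Ed d)) [IsMarkovKernel K]
    (hmeas : Measurable fun p : Ed d × Ed d => relEnt (K p.1) (K p.2))
    (Pstar : Measure (Ed d × Ed d)) [IsProbabilityMeasure Pstar]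
    (hco : isCoupling Pstar μ (mbind η K))
    (hmin : ∀ Q : Measure (Ed d × Ed d), IsProbabilityMeasure Q →
      isCoupling Q μ (mbind η K) → relEnt Pstar (μ ⊗ₘ K) ≤ relEnt Q (μ ⊗ₘ K)) :
    relEnt (mbind η K) (mbind μ K) ≤ relEnt Pstar (μ ⊗ₘ K) ∧
      relEnt Pstar (μ ⊗ₘ K) ≤ entCost K η μ := by
  classical
  -- identification of second marginals
  have hsnd : (μ ⊗ₘ K).map Prod.snd = mbind μ K := by
    ext s hs
    rw [Measure.map_apply measurable_snd hs, Measure.compProd_apply (measurable_snd hs),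
      mbind, Measure.bind_apply hs K.measurable.aemeasurable]
    rfl
  haveI : IsProbabilityMeasure (μ ⊗ₘ K) := by infer_instance
  constructor
  · have h1 : relEnt (mbind η K) (mbind μ K)
        = relEnt (Pstar.map Prod.snd) ((μ ⊗ₘ K).map Prod.snd) := by
      rw [hco.2, hsnd]
    rw [h1]
    exact relEnt_map_le measurable_snd
  · rw [entCost]
    refine le_iInf fun R => le_iInf fun hR => ?_
    haveI hRP : IsProbabilityMeasure R := by
      constructor
      have : (R.map Prod.fst) Set.univ = 1 := by rw [hR.1]; simp
      rwa [Measure.map_apply measurable_fst MeasurableSet.univ, Set.preimage_univ] at this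
    set K₁ : Kernel (Ed d × Ed d) (Ed d) := K.comap Prod.fst measurable_fst with hK₁
    set K₂ : Kernel (Ed d × Ed d) (Ed d) := K.comap Prod.snd measurable_snd with hK₂
    set T : (Ed d × Ed d) × Ed d → Ed d × Ed d := fun q => (q.1.2, q.2) with hTdef
    have hT : Measurable T := (measurable_snd.comp measurable_fst).prodMk measurable_snd
    haveI : IsProbabilityMeasure (R ⊗ₘ K₁) := by infer_instance
    haveI : IsProbabilityMeasure (R ⊗ₘ K₂) := by infer_instance
    haveI : IsProbabilityMeasure ((R ⊗ₘ K₁).map T) := Measure.isProbabilityMeasure_map hT.aemeasurable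
    -- the reference measure pushes to μ ⊗ₘ K
    have hJ₀ : (R ⊗ₘ K₂).map T = μ ⊗ₘ K := by
      ext s hs
      rw [Measure.map_apply hT hs, Measure.compProd_apply (hT hs), Measure.compProd_apply hs]
      have h2 : ∀ p : Ed d × Ed d, K₂ p (Prod.mk p ⁻¹' (T ⁻¹' s)) = K p.2 (Prod.mk p.2 ⁻¹' s) := by
        intro p
        rw [hK₂, Kernel.comap_apply]
        rfl
      rw [lintegral_congr h2, ← hR.2,
        lintegral_map (Kernel.measurable_kernel_prodMk_left hs) measurable_snd]
    -- marginals of Q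
    have hQfst : ((R ⊗ₘ K₁).map T).map Prod.fst = μ := by
      rw [Measure.map_map measurable_fst hT]
      have h3 : (Prod.fst ∘ T) = (Prod.snd ∘ (Prod.fst : (Ed d × Ed d) × Ed d → Ed d × Ed d)) := rfl
      rw [h3, ← Measure.map_map measurable_snd measurable_fst]
      have h4 : (R ⊗ₘ K₁).map Prod.fst = R := Measure.fst_compProd R K₁
      rw [h4, hR.2]
    have hQsnd : ((R ⊗ₘ K₁).map T).map Prod.snd = mbind η K := by
      rw [Measure.map_map measurable_snd hT]
      have h3 : (Prod.snd ∘ T) = (Prod.snd : (Ed d × Ed d) × Ed d → Ed d) := rfl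
      rw [h3]
      ext s hs
      rw [Measure.map_apply measurable_snd hs, Measure.compProd_apply (measurable_snd hs),
        mbind, Measure.bind_apply hs K.measurable.aemeasurable]
      have h5 : ∀ p : Ed d × Ed d, K₁ p (Prod.mk p ⁻¹' (Prod.snd ⁻¹' s)) = K p.1 s := by
        intro p
        rw [hK₁, Kernel.comap_apply]
        rfl
      rw [lintegral_congr h5, ← hR.1, lintegral_map (Kernel.measurable_coe K hs) measurable_fst]
    have hQ : relEnt Pstar (μ ⊗ₘ K) ≤ relEnt ((R ⊗ₘ K₁).map T) (μ ⊗ₘ K) :=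
      hmin _ inferInstance ⟨hQfst, hQsnd⟩
    refine le_trans hQ ?_
    rw [← hJ₀]
    refine le_trans (relEnt_map_le hT) ?_
    have hm : Measurable fun p : Ed d × Ed d => relEnt (K₁ p) (K₂ p) := by
      simp only [hK₁, hK₂, Kernel.comap_apply]
      exact hmeas
    refine le_trans (relEnt_compProd_le K₁ K₂ hm) ?_
    refine le_of_eq (lintegral_congr fun p => ?_)
    rw [hK₁, hK₂, Kernel.comap_apply, Kernel.comap_apply]
end

section
/- Let ϖ be a positive definite d×d real matrix and r_ϖ := −ϖ/2 + (ϖ + (ϖ/2)²)^{1/2}. Then (1/√2)(ϖ^{1/2} − ϖ/(2(1+√2))) ≤ r_ϖ in the Loewner order, and ℓ_max(r_ϖ) ≤ ℓ_max(ϖ) / ( max(ℓ_min(ϖ)^{1/2}, ℓ_min(ϖ)/2) + ℓ_min(ϖ)/2 ) ≤ ℓ_max(ϖ) / ℓ_min(ϖ)^{1/2}. -/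
open MeasureTheory ProbabilityTheory ENNReal
open scoped RealInnerProductSpace Classical

section RiccatiAux
open Matrix


private lemma scalar1 {x : ℝ} (hx : 0 ≤ x) :
    (Real.sqrt 2)⁻¹ * (Real.sqrt x - (2 * (1 + Real.sqrt 2))⁻¹ * x)
      ≤ -(x / 2) + Real.sqrt (x + (x / 2) ^ 2) := by
  have h2 : (Real.sqrt 2) ^ 2 = 2 := Real.sq_sqrt (by norm_num)
  have h2p : (1:ℝ) ≤ Real.sqrt 2 := by nlinarith [Real.sqrt_nonneg 2]
  have ht2 : (Real.sqrt x) ^ 2 = x := Real.sq_sqrt hx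
  have ht0 : 0 ≤ Real.sqrt x := Real.sqrt_nonneg x
  set t := Real.sqrt x with htdef
  set r := Real.sqrt 2 with hrdef
  have hr0 : (0:ℝ) < r := by linarith
  set s := Real.sqrt (x + (x/2)^2) with hsdef
  have hs2 : s^2 = x + (x/2)^2 := Real.sq_sqrt (by positivity)
  have hs0 : 0 ≤ s := Real.sqrt_nonneg _
  have key : t + x / 2 ≤ s * r := by
    have h1 : (t + x / 2) / r ≤ s := by
      rw [hsdef, Real.le_sqrt (by positivity) (by positivity)]
      rw [div_pow, div_le_iff₀ (by positivity)]
      nlinarith [sq_nonneg (t * (2 - t))]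
    calc t + x / 2 = (t + x / 2) / r * r := by field_simp
    _ ≤ s * r := by gcongr
  have e1 : (2 * (1 + r))⁻¹ = (r - 1) / 2 :=
    inv_eq_of_mul_eq_one_right (by linear_combination h2)
  have e2 : r⁻¹ = r / 2 := inv_eq_of_mul_eq_one_right (by linear_combination h2 / 2)
  rw [e1, e2]
  have h2x : r^2 * x = 2 * x := by rw [h2]
  nlinarith [mul_le_mul_of_nonneg_left key (by positivity : (0:ℝ) ≤ r/2), h2x]

private lemma scalar2 {m x M : ℝ} (hm : 0 < m) (hmx : m ≤ x) (hxM : x ≤ M) :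
    -(x/2) + Real.sqrt (x + (x/2)^2) ≤ M / (max (Real.sqrt m) (m/2) + m/2) := by
  have hx : 0 < x := lt_of_lt_of_le hm hmx
  set s := Real.sqrt (x + (x/2)^2) with hsdef
  have hs2 : s^2 = x + (x/2)^2 := Real.sq_sqrt (by positivity)
  have hs0 : 0 ≤ s := Real.sqrt_nonneg _
  have hsx : Real.sqrt x ≤ s := Real.sqrt_le_sqrt (by nlinarith)
  have hsx2 : x/2 ≤ s := by nlinarith
  have hKm : Real.sqrt m ≤ s := le_trans (Real.sqrt_le_sqrt hmx) hsx
  have hK : max (Real.sqrt m) (m/2) ≤ s := max_le hKm (by linarith)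
  have hsqm : 0 < Real.sqrt m := Real.sqrt_pos.2 hm
  have hden : 0 < max (Real.sqrt m) (m/2) + m/2 := by
    have := le_max_left (Real.sqrt m) (m/2); linarith
  have heq : -(x/2) + s = x / (s + x/2) := by
    rw [_root_.eq_div_iff (by positivity)]
    linear_combination hs2
  rw [heq]
  exact div_le_div₀ (le_trans hm.le (le_trans hmx hxM)) hxM hden (by linarith)

private lemma eig_le_of_loewner {d : ℕ} {A : Matrix (Fin d) (Fin d) ℝ}
    (hA : A.IsHermitian) {c : ℝ}
    (h : (c • (1 : Matrix (Fin d) (Fin d) ℝ) - A).PosSemidef) (i : Fin d) :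
    hA.eigenvalues i ≤ c := by
  have hv := hA.mulVec_eigenvectorBasis i
  set v : Fin d → ℝ := ⇑(hA.eigenvectorBasis i) with hvdef
  have hvv : dotProduct v v = 1 := by
    have hnorm : ‖hA.eigenvectorBasis i‖ = 1 := hA.eigenvectorBasis.orthonormal.1 i
    have h1 : ⟪hA.eigenvectorBasis i, hA.eigenvectorBasis i⟫ = 1 := by
      rw [real_inner_self_eq_norm_sq, hnorm]; norm_num
    have h3 := hnorm
    rw [EuclideanSpace.norm_eq, Real.sqrt_eq_one] at h3
    simpa [dotProduct, Real.norm_eq_abs, sq_abs, sq] using h3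
  have h2 := h.dotProduct_mulVec_nonneg v
  rw [Matrix.sub_mulVec, Matrix.smul_mulVec, Matrix.one_mulVec, hv] at h2
  simp only [star_trivial, dotProduct_sub, dotProduct_smul, smul_eq_mul,
    hvv, mul_one] at h2
  linarith

end RiccatiAux

open Matrix in
/-- lower bound and eigenvalue estimates for the Riccati fixed
point `r_ϖ`. -/
theorem riccati_fixed_point_bounds
    (d : ℕ) (hd : 1 ≤ d) (ϖ : Matrix (Fin d) (Fin d) ℝ) (hϖ : ϖ.PosDef) :
    loewnerLE ((Real.sqrt 2)⁻¹ • (msqrt ϖ - (2 * (1 + Real.sqrt 2))⁻¹ • ϖ)) (riccFix ϖ) ∧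
    lmax (riccFix ϖ) ≤
      lmax ϖ / (max (Real.sqrt (lmin ϖ)) (lmin ϖ / 2) + lmin ϖ / 2) ∧
    lmax ϖ / (max (Real.sqrt (lmin ϖ)) (lmin ϖ / 2) + lmin ϖ / 2) ≤
      lmax ϖ / Real.sqrt (lmin ϖ) := by
  classical
  have hne : Nonempty (Fin d) := ⟨⟨0, hd⟩⟩
  have hH : ϖ.IsHermitian := hϖ.1
  set U : Matrix (Fin d) (Fin d) ℝ := (hH.eigenvectorUnitary : Matrix (Fin d) (Fin d) ℝ)
    with hUdef
  have hU2 : U * star U = 1 := mem_unitaryGroup_iff.mp (hH.eigenvectorUnitary).2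
  have hU1 : star U * U = 1 := mem_unitaryGroup_iff'.mp (hH.eigenvectorUnitary).2
  set eig : Fin d → ℝ := hH.eigenvalues with heigdef
  obtain ⟨C, hCdef⟩ :
      ∃ C : (ℝ → ℝ) → Matrix (Fin d) (Fin d) ℝ,
        C = fun f => U * Matrix.diagonal (fun i => f (eig i)) * star U := ⟨_, rfl⟩
  have hCmul : ∀ f g : ℝ → ℝ, C f * C g = C (fun x => f x * g x) := by
    intro f g
    simp only [hCdef, Matrix.mul_assoc]
    rw [← Matrix.mul_assoc (star U) U, hU1, Matrix.one_mul,
      ← Matrix.mul_assoc (Matrix.diagonal _) (Matrix.diagonal _), diagonal_mul_diagonal]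
  have hCadd : ∀ f g : ℝ → ℝ, C f + C g = C (fun x => f x + g x) := by
    intro f g
    simp only [hCdef, ← Matrix.add_mul, ← Matrix.mul_add, diagonal_add]
  have hCsmul : ∀ (a : ℝ) (f : ℝ → ℝ), a • C f = C (fun x => a * f x) := by
    intro a f
    simp only [hCdef]
    rw [show (fun i => a * f (eig i)) = a • (fun i => f (eig i)) from rfl, diagonal_smul]
    simp [smul_mul_assoc, mul_smul_comm]
  have hCneg : ∀ f : ℝ → ℝ, -C f = C (fun x => -f x) := by
    intro f
    have h := hCsmul (-1) f
    simp only [neg_one_smul, neg_one_mul] at h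
    exact h
  have hCsub : ∀ f g : ℝ → ℝ, C f - C g = C (fun x => f x - g x) := by
    intro f g
    rw [sub_eq_add_neg, hCneg, hCadd]
    simp only [← sub_eq_add_neg]
  have hCone : C (fun _ => 1) = 1 := by
    simp only [hCdef, diagonal_one, Matrix.mul_one, hU2]
  have hCherm : ∀ f : ℝ → ℝ, (C f).IsHermitian := by
    intro f
    simp only [hCdef, Matrix.IsHermitian, star_eq_conjTranspose, conjTranspose_mul,
      conjTranspose_conjTranspose, diagonal_conjTranspose, star_trivial,
      Matrix.mul_assoc]
  have hCpsd : ∀ f : ℝ → ℝ, (∀ i, 0 ≤ f (eig i)) → (C f).PosSemidef := by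
    intro f hf
    have := (posSemidef_diagonal_iff.mpr hf).mul_mul_conjTranspose_same U
    simpa [hCdef, star_eq_conjTranspose] using this
  have hCext : ∀ f g : ℝ → ℝ, (∀ i, f (eig i) = g (eig i)) → C f = C g := by
    intro f g h
    have : (fun i => f (eig i)) = (fun i => g (eig i)) := funext h
    simp only [hCdef, this]
  have heigpos : ∀ i, 0 < eig i := fun i => hϖ.eigenvalues_pos i
  have hspec : ϖ = C (fun x => x) := by
    conv_lhs => rw [hH.spectral_theorem]
    simp only [hCdef]
    rfl
  -- the matrix ϖ + (ϖ/2)^2 and its square root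
  have hAeq : ϖ + ((1 / 2 : ℝ) • ϖ) ^ 2 = C (fun x => x + (x / 2) ^ 2) := by
    calc ϖ + ((1 / 2 : ℝ) • ϖ) ^ 2
        = C (fun x => x) + ((1/2 : ℝ) • C (fun x => x)) * ((1/2 : ℝ) • C (fun x => x)) := by
          rw [← hspec, pow_two]
      _ = C (fun x => x + (x / 2) ^ 2) := by
          rw [hCsmul, hCmul, hCadd]
          exact hCext _ _ (fun i => by ring)
  have hApsd : (ϖ + ((1 / 2 : ℝ) • ϖ) ^ 2).PosSemidef := by
    rw [hAeq]
    exact hCpsd _ (fun i => by nlinarith [heigpos i])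
  have hsqA : msqrt (ϖ + ((1 / 2 : ℝ) • ϖ) ^ 2) = C (fun x => Real.sqrt (x + (x/2)^2)) := by
    have key : ∀ (B : Matrix (Fin d) (Fin d) ℝ) (hB : B.IsHermitian) (f : ℝ → ℝ),
        cfc f B = hB.eigenvectorUnitary.1 * Matrix.diagonal (f ∘ hB.eigenvalues) *
          (star hB.eigenvectorUnitary : Matrix (Fin d) (Fin d) ℝ) := by
      intro B hB f
      rw [hB.cfc_eq]
      simp [IsHermitian.cfc, RCLike.ofReal_real_eq_id]
    have hCcfc : ∀ f, C f = cfc f ϖ := by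
      intro f; rw [key ϖ hH f, hCdef]; rfl
    simp only [msqrt, dif_pos hApsd]
    refine (key _ hApsd.1 Real.sqrt).symm.trans ?_
    rw [hAeq, hCcfc, hCcfc]
    exact (cfc_comp' Real.sqrt (fun x => x + (x / 2) ^ 2) ϖ
      (hg := Real.continuous_sqrt.continuousOn)
      (hf := (by fun_prop : Continuous fun x : ℝ => x + (x / 2) ^ 2).continuousOn)
      (ha := hH)).symm
  have hsqϖ : msqrt ϖ = C Real.sqrt := by
    simp only [msqrt, dif_pos hϖ.posSemidef]
    rw [hCdef]; rfl
  have hric : riccFix ϖ = C (fun x => -(x/2) + Real.sqrt (x + (x/2)^2)) := by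
    rw [riccFix, hsqA]
    nth_rewrite 1 [hspec]
    rw [hCsmul, hCneg, hCadd]
    exact hCext _ _ (fun i => by ring_nf)
  -- eigenvalue bounds
  have hlmin : lmin ϖ = ⨅ i, eig i := by simp only [lmin, dif_pos hH]; rfl
  have hlmax : lmax ϖ = ⨆ i, eig i := by simp only [lmax, dif_pos hH]; rfl
  have hm_le : ∀ i, lmin ϖ ≤ eig i := by
    intro i; rw [hlmin]
    exact ciInf_le (Set.Finite.bddBelow (Set.finite_range _)) i
  have hM_ge : ∀ i, eig i ≤ lmax ϖ := by
    intro i; rw [hlmax]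
    exact le_ciSup (Set.Finite.bddAbove (Set.finite_range _)) i
  have hm_pos : 0 < lmin ϖ := by
    obtain ⟨i0, hi0⟩ := Finite.exists_min eig
    rw [hlmin]
    exact lt_of_lt_of_le (heigpos i0) (le_ciInf hi0)
  have hM_pos : 0 < lmax ϖ := lt_of_lt_of_le hm_pos (le_trans (hm_le (Classical.arbitrary _))
    (hM_ge (Classical.arbitrary _)))
  refine ⟨?_, ?_, ?_⟩
  · -- part 1
    rw [loewnerLE, hric, hsqϖ]
    rw [hspec]
    rw [hCsmul, hCsub, hCsmul, hCsub]
    refine hCpsd _ (fun i => ?_)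
    have := scalar1 (heigpos i).le
    linarith
  · -- part 2
    set c := lmax ϖ / (max (Real.sqrt (lmin ϖ)) (lmin ϖ / 2) + lmin ϖ / 2) with hc
    have hherm : (riccFix ϖ).IsHermitian := by rw [hric]; exact hCherm _
    have hpsd : (c • (1 : Matrix (Fin d) (Fin d) ℝ) - riccFix ϖ).PosSemidef := by
      rw [hric, ← hCone, hCsmul, hCsub]
      refine hCpsd _ (fun i => ?_)
      have := scalar2 hm_pos (hm_le i) (hM_ge i)
      linarith
    rw [lmax, dif_pos hherm]
    exact ciSup_le fun i => eig_le_of_loewner hherm hpsd i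
  · -- part 3
    have h1 : Real.sqrt (lmin ϖ) ≤ max (Real.sqrt (lmin ϖ)) (lmin ϖ / 2) + lmin ϖ / 2 := by
      have := le_max_left (Real.sqrt (lmin ϖ)) (lmin ϖ / 2); linarith
    exact div_le_div_of_nonneg_left hM_pos.le (Real.sqrt_pos.2 hm_pos) h1
end
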